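/- Let Δ ≥ 1 and let a, x be integers with 0 ≤ x and x + 2 ≤ a ≤ Δ. Let Σ' = {X, M, O, U, A, B, P, Q} be eight labels with underlying sets S_X = {X}, S_M = {M,X}, S_O = {O,X}, S_U = {M,O,X}, S_A = {A,O,X}, S_B = {M,A,O,X}, S_P = {P,A,O,X}, S_Q = {M,P,A,O,X} (subsets of {M,P,A,O,X}). Let Y : Fin Δ → (nonempty subsets of Σ') be such that each Y(i) is right-closed, meaning that whenever L ∈ Y(i) and S_L ⊆ S_{L'} then L' ∈ Y(i). Suppose that every transversal g : Fin Δ → Σ' with g(i) ∈ Y(i) for all i satisfies at least one of: (a) the number of indices i with g(i) ∈ {M,U,B,Q} is at least Δ − x; (b) there exists an index i with g(i) ∈ {P,Q} such that g(j) ∈ {O,U,A,B,P,Q} for all j ≠ i; (c) the number of indices i with g(i) ∈ {A,B,P,Q} is at least a. Then at least one of the following holds: (1) the number of indices i with Y(i) ⊆ {M,U,B,Q} is at least Δ − x − 1; (2) there exists an index i with Y(i) ⊆ {P,Q} such that Y(j) ⊆ {O,U,A,B,P,Q} for all j ≠ i; (3) the number of indices i with Y(i) ⊆ {A,B,P,Q}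 is at least a − x − 1; (4) the number of indices i with Y(i) ⊆ {U,B,P,Q} is at least Δ − x. -/

import Mathlib

inductive Lab : Type
  | M | P | O | A | X
  deriving DecidableEq

instance : Fintype Lab :=
  ⟨{Lab.M, Lab.P, Lab.O, Lab.A, Lab.X}, fun x => by cases x <;> simp⟩

/-- Node constraint `N_Δ(a,x)`: the three allowed multisets of size `Δ`. -/
def nodeC (Δ a x : ℕ) (m : Multiset Lab) : Prop :=
  m = Multiset.replicate (Δ - x) Lab.M + Multiset.replicate x Lab.X ∨
  m = Multiset.replicate a Lab.A + Multiset.replicate (Δ - a) Lab.X ∨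
  m = Lab.P ::ₘ Multiset.replicate (Δ - 1) Lab.O

/-- Edge constraint `E`: all unordered pairs except `{M,M}, {A,A}, {P,P}, {P,A}, {P,O}`. -/
def edgeC (l₁ l₂ : Lab) : Prop :=
  ¬ ((l₁ = Lab.M ∧ l₂ = Lab.M) ∨ (l₁ = Lab.A ∧ l₂ = Lab.A) ∨ (l₁ = Lab.P ∧ l₂ = Lab.P) ∨
     (l₁ = Lab.P ∧ l₂ = Lab.A) ∨ (l₁ = Lab.A ∧ l₂ = Lab.P) ∨
     (l₁ = Lab.P ∧ l₂ = Lab.O) ∨ (l₁ = Lab.O ∧ l₂ = Lab.P))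

instance (l₁ l₂ : Lab) : Decidable (edgeC l₁ l₂) := by
  unfold edgeC; infer_instance

/-- A valid `Π_Δ(a,x)`-labeling: `ℓ u v` is the label that `u` assigns to the edge `{u,v}`. -/
def validLabeling {V : Type*} [Fintype V] (G : SimpleGraph V) [DecidableRel G.Adj]
    (Δ a x : ℕ) (ℓ : V → V → Lab) : Prop :=
  (∀ v : V, nodeC Δ a x ((G.neighborFinset v).val.map (ℓ v))) ∧
  (∀ u v : V, G.Adj u v → edgeC (ℓ u v) (ℓ v u))

/-- The eight labels of `re(Π_Δ(a,x))`. -/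
inductive Lab2 : Type
  | X | M | O | U | A | B | P | Q
  deriving DecidableEq

instance : Fintype Lab2 :=
  ⟨{Lab2.X, Lab2.M, Lab2.O, Lab2.U, Lab2.A, Lab2.B, Lab2.P, Lab2.Q}, fun x => by cases x <;> simp⟩

/-- Underlying label-set of each label of `re(Π_Δ(a,x))`. -/
def uset : Lab2 → Finset Lab
  | Lab2.X => {Lab.X}
  | Lab2.M => {Lab.M, Lab.X}
  | Lab2.O => {Lab.O, Lab.X}
  | Lab2.U => {Lab.M, Lab.O, Lab.X}
  | Lab2.A => {Lab.A, Lab.O, Lab.X}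
  | Lab2.B => {Lab.M, Lab.A, Lab.O, Lab.X}
  | Lab2.P => {Lab.P, Lab.A, Lab.O, Lab.X}
  | Lab2.Q => {Lab.M, Lab.P, Lab.A, Lab.O, Lab.X}

/-- A set of labels of `re(Π_Δ(a,x))` is right-closed if with any label it contains all
labels whose underlying sets are supersets. -/
def rightClosed2 (Y : Finset Lab2) : Prop :=
  ∀ L ∈ Y, ∀ L' : Lab2, uset L ⊆ uset L' → L' ∈ Y

/-
Contrapositively, if (1)–(4) all fail we build a transversal violating (a)–(c). First shrink
`Y` to a tuple `Z` of nonempty subsets on which (b) is impossible: if some `Y j` contains `X`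
or `M`, pin `Z j` to that label, which costs at most one in the count of (1); otherwise drop
`P` and `Q` everywhere, which leaves `B` in every `Y i` since (2) fails. Then pick from each
`Z i` a label outside both counted sets `{M,U,B,Q}` and `{A,B,P,Q}` when there is one.
Indices with no such label are forced into one count or both, except the flexible ones that
may go to either side; sending flexible indices to the first count until its budget `Δ - x - 1`
is exhausted overflows into the second count by at most `x + 1` indices beyond those already
forced there, and that stays below `a` because (3) fails.
-/

open Finset

namespace Finset
variable {ι α : Type*} [DecidableEq ι] [DecidableEq α]

theorem exists_subset_card_union_le_card_union_sdiff_lt {s t F : Finset ι} {a b n : ℕ}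
    (hn : #(s ∪ t) + #F ≤ n) (hFt : Disjoint F t) (hs : #s ≤ b) (ht : #t < a)
    (htn : #t + n < a + b) :
    ∃ S ⊆ F, #(s ∪ S) ≤ b ∧ #(t ∪ (F \ S)) < a := by
  obtain ⟨S, hSF, hS⟩ := exists_subset_card_eq (min_le_left #F (b - #s))
  refine ⟨S, hSF, (card_union_le s S).trans (by omega), ?_⟩
  have hst := card_union_add_card_inter s t
  have hinter : #(s ∩ t) ≤ #t := card_le_card inter_subset_right
  rw [card_union_of_disjoint (hFt.symm.mono_right sdiff_subset), card_sdiff_of_subset hSF]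
  omega

-- Pick `L` outside `C ∪ D` if possible; otherwise outside `D` when `Y ⊆ C ∨ p`, else outside `C`.
theorem exists_mem_imp_subset (Y C D : Finset α) (hY : Y.Nonempty) (p : Prop) :
    ∃ L ∈ Y, (L ∈ C → Y ⊆ C ∨ p) ∧
      (L ∈ D → Y ⊆ D ∨ (Y ⊆ C ∪ D ∧ ¬Y ⊆ C ∧ ¬Y ⊆ D ∧ ¬p)) := by
  by_cases hCD : Y ⊆ C ∪ D
  · by_cases hp : Y ⊆ C ∨ p
    · by_cases hD : Y ⊆ D
      · obtain ⟨L, hL⟩ := hY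
        exact ⟨L, hL, fun _ => hp, fun _ => Or.inl hD⟩
      · obtain ⟨L, hL, hLD⟩ := not_subset.mp hD
        exact ⟨L, hL, fun _ => hp, fun h => absurd h hLD⟩
    · obtain ⟨hC, hp⟩ := not_or.mp hp
      obtain ⟨L, hL, hLC⟩ := not_subset.mp hC
      exact ⟨L, hL, fun h => absurd h hLC,
        fun _ => (em (Y ⊆ D)).imp_right fun hD => ⟨hCD, hC, hD, hp⟩⟩
  · obtain ⟨L, hL, hLCD⟩ := not_subset.mp hCD
    refine ⟨L, hL, fun h => absurd (mem_union_left D h) hLCD,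
      fun h => absurd (mem_union_right C h) hLCD⟩

variable [Fintype ι]

theorem exists_transversal_card_filter_le_lt (Y : ι → Finset α) (hY : ∀ i, (Y i).Nonempty)
    (C D : Finset α) {a b : ℕ} (hC : #{i | Y i ⊆ C} ≤ b) (hD : #{i | Y i ⊆ D} < a)
    (hι : #{i | Y i ⊆ D} + Fintype.card ι < a + b) :
    ∃ g : ι → α, (∀ i, g i ∈ Y i) ∧ #{i | g i ∈ C} ≤ b ∧ #{i | g i ∈ D} < a := by
  set F : Finset ι := {i | Y i ⊆ C ∪ D ∧ ¬Y i ⊆ C ∧ ¬Y i ⊆ D}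
  have hF :
      #(({i | Y i ⊆ C} : Finset ι) ∪ ({i | Y i ⊆ D} : Finset ι)) + #F ≤ Fintype.card ι := by
    rw [← card_union_of_disjoint]
    · exact card_le_univ _
    · simp only [F, disjoint_left, mem_union, mem_filter_univ]
      tauto
  obtain ⟨S, -, hSC, hSD⟩ := exists_subset_card_union_le_card_union_sdiff_lt hF
    (disjoint_filter.mpr fun _ _ h => h.2.2) hC hD hι
  choose g hgY hgC hgD using fun i => exists_mem_imp_subset (Y i) C D (hY i) (i ∈ S)
  refine ⟨g, hgY, (card_le_card fun i hi => ?_).trans hSC,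
    (card_le_card fun i hi => ?_).trans_lt hSD⟩ <;> simp only [mem_filter_univ] at hi
  · simpa using hgC i hi
  · simpa [F, and_assoc] using hgD i hi

end Finset

namespace Lab2

-- The node constraint of `re(Π_Δ(a,x))` (Lemma 3.2), on a transversal.
def reNodeC (Δ a x : ℕ) (g : Fin Δ → Lab2) : Prop :=
  Δ - x ≤ #{i | g i ∈ ({M, U, B, Q} : Finset Lab2)} ∨
    (∃ i, g i ∈ ({P, Q} : Finset Lab2) ∧
      ∀ j, j ≠ i → g j ∈ ({O, U, A, B, P, Q} : Finset Lab2)) ∨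
    a ≤ #{i | g i ∈ ({A, B, P, Q} : Finset Lab2)}

theorem B_mem_of_rightClosed2 {Y : Finset Lab2} (hY : rightClosed2 Y)
    (hPQ : ¬Y ⊆ {P, Q}) : B ∈ Y := by
  obtain ⟨L, hL, hLPQ⟩ := not_subset.mp hPQ
  exact hY L hL B (by revert hLPQ; cases L <;> decide)

theorem subset_OUABPQ {Y : Finset Lab2} (hX : X ∉ Y) (hM : M ∉ Y) :
    Y ⊆ {O, U, A, B, P, Q} := by
  intro L hL
  cases L <;> simp_all

theorem subset_UBPQ_of_sdiff_subset {Y : Finset Lab2} (hM : M ∉ Y)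
    (h : Y \ {P, Q} ⊆ {M, U, B, Q}) : Y ⊆ {U, B, P, Q} := by
  intro L hL
  have := @h L
  cases L <;> simp_all

theorem exists_not_reNodeC_of_subset {Δ a x : ℕ} (hax : x + 2 ≤ a) (haΔ : a ≤ Δ)
    {Y Z : Fin Δ → Finset Lab2} (hZY : ∀ i, Z i ⊆ Y i) (hZ : ∀ i, (Z i).Nonempty)
    (hMUBQ : #{i | Z i ⊆ {M, U, B, Q}} < Δ - x)
    (hABPQ : #{i | Z i ⊆ {A, B, P, Q}} < a - x - 1)
    (hPQ : ∀ g : Fin Δ → Lab2, (∀ i, g i ∈ Z i) → ¬∃ i, g i ∈ ({P, Q} : Finset Lab2) ∧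
      ∀ j, j ≠ i → g j ∈ ({O, U, A, B, P, Q} : Finset Lab2)) :
    ∃ g : Fin Δ → Lab2, (∀ i, g i ∈ Y i) ∧ ¬reNodeC Δ a x g := by
  obtain ⟨g, hgZ, hgMUBQ, hgABPQ⟩ := exists_transversal_card_filter_le_lt Z hZ {M, U, B, Q}
    {A, B, P, Q} (a := a) (b := Δ - x - 1) (by omega) (by omega)
    (by simp only [Fintype.card_fin]; omega)
  refine ⟨g, fun i => hZY i (hgZ i), ?_⟩
  simp only [reNodeC, not_or, not_le]
  exact ⟨by omega, hPQ g hgZ, hgABPQ⟩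

theorem exists_not_reNodeC_of_mem_X_or_M {Δ a x : ℕ} (hax : x + 2 ≤ a) (haΔ : a ≤ Δ)
    {Y : Fin Δ → Finset Lab2} (hne : ∀ i, (Y i).Nonempty) {j : Fin Δ} (hj : X ∈ Y j ∨ M ∈ Y j)
    (hMUBQ : #{i | Y i ⊆ {M, U, B, Q}} < Δ - x - 1)
    (hABPQ : #{i | Y i ⊆ {A, B, P, Q}} < a - x - 1) :
    ∃ g : Fin Δ → Lab2, (∀ i, g i ∈ Y i) ∧ ¬reNodeC Δ a x g := by
  obtain ⟨L, hLY, hL⟩ : ∃ L ∈ Y j, L = X ∨ L = M := by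
    rcases hj with h | h
    exacts [⟨X, h, .inl rfl⟩, ⟨M, h, .inr rfl⟩]
  set Z := Function.update Y j {L}
  have hZj : Z j = {L} := Function.update_self ..
  have hZ : ∀ i ≠ j, Z i = Y i := fun i hi => Function.update_of_ne hi ..
  refine exists_not_reNodeC_of_subset hax haΔ (Z := Z) (fun i => ?_) (fun i => ?_) ?_ ?_ ?_
  · rcases eq_or_ne i j with rfl | hi
    · simpa [hZj] using hLY
    · rw [hZ i hi]
  · rcases eq_or_ne i j with rfl | hi
    · simp [hZj]
    · rw [hZ i hi]; exact hne i
  · have hsub : ({i | Z i ⊆ {M, U, B, Q}} : Finset (Fin Δ)) ⊆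
        insert j ({i | Y i ⊆ {M, U, B, Q}} : Finset (Fin Δ)) := fun i hi => by
      rw [mem_filter_univ] at hi
      rw [mem_insert, mem_filter_univ, or_iff_not_imp_left]
      exact fun hij => hZ i hij ▸ hi
    have := (card_le_card hsub).trans (card_insert_le _ _)
    omega
  · refine (card_le_card fun i hi => ?_).trans_lt hABPQ
    rw [mem_filter_univ] at hi ⊢
    rcases eq_or_ne i j with rfl | hij
    · rcases hL with rfl | rfl <;> simp [hZj] at hi
    · rwa [← hZ i hij]
  · rintro g hg ⟨i, hi, hall⟩
    have hgj : g j = L := by simpa [hZj] using hg j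
    rcases eq_or_ne j i with rfl | hji
    · rcases hL with rfl | rfl <;> simp [hgj] at hi
    · have := hall j hji
      rcases hL with rfl | rfl <;> simp [hgj] at this

theorem exists_not_reNodeC_of_forall_not_mem {Δ a x : ℕ} (hax : x + 2 ≤ a) (haΔ : a ≤ Δ)
    {Y : Fin Δ → Finset Lab2} (hrc : ∀ i, rightClosed2 (Y i)) (hX : ∀ i, X ∉ Y i)
    (hM : ∀ i, M ∉ Y i)
    (hPQ : ∀ i, Y i ⊆ {P, Q} → ∃ j, j ≠ i ∧ ¬Y j ⊆ {O, U, A, B, P, Q})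
    (hABPQ : #{i | Y i ⊆ {A, B, P, Q}} < a - x - 1)
    (hUBPQ : #{i | Y i ⊆ {U, B, P, Q}} < Δ - x) :
    ∃ g : Fin Δ → Lab2, (∀ i, g i ∈ Y i) ∧ ¬reNodeC Δ a x g := by
  refine exists_not_reNodeC_of_subset hax haΔ (Z := fun i => Y i \ {P, Q})
    (fun i => sdiff_subset) (fun i => ⟨B, ?_⟩) ?_ ?_ ?_
  · have hB : B ∈ Y i := B_mem_of_rightClosed2 (hrc i) fun hi =>
      let ⟨j, _, hj⟩ := hPQ i hi
      hj (subset_OUABPQ (hX j) (hM j))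
    simpa using hB
  · refine (card_le_card fun i hi => ?_).trans_lt hUBPQ
    rw [mem_filter_univ] at hi ⊢
    exact subset_UBPQ_of_sdiff_subset (hM i) hi
  · refine (card_le_card fun i hi => ?_).trans_lt hABPQ
    rw [mem_filter_univ] at hi ⊢
    exact (sdiff_le_iff.mp hi).trans (by decide)
  · rintro g hg ⟨i, hi, -⟩
    exact (mem_sdiff.mp (hg i)).2 hi

end Lab2

theorem stmt_3_general (Δ a x : ℕ) (hax : x + 2 ≤ a) (haΔ : a ≤ Δ)
    (Y : Fin Δ → Finset Lab2)
    (hne : ∀ i, (Y i).Nonempty)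
    (hrc : ∀ i, rightClosed2 (Y i))
    (htr : ∀ g : Fin Δ → Lab2, (∀ i, g i ∈ Y i) →
      (Δ - x ≤ (Finset.univ.filter
          (fun i => g i ∈ ({Lab2.M, Lab2.U, Lab2.B, Lab2.Q} : Finset Lab2))).card ∨
       (∃ i, g i ∈ ({Lab2.P, Lab2.Q} : Finset Lab2) ∧ ∀ j, j ≠ i →
          g j ∈ ({Lab2.O, Lab2.U, Lab2.A, Lab2.B, Lab2.P, Lab2.Q} : Finset Lab2)) ∨
       a ≤ (Finset.univ.filter
          (fun i => g i ∈ ({Lab2.A, Lab2.B, Lab2.P, Lab2.Q} : Finset Lab2))).card)) :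
    (Δ - x - 1 ≤ (Finset.univ.filter
        (fun i => Y i ⊆ ({Lab2.M, Lab2.U, Lab2.B, Lab2.Q} : Finset Lab2))).card ∨
     (∃ i, Y i ⊆ ({Lab2.P, Lab2.Q} : Finset Lab2) ∧ ∀ j, j ≠ i →
        Y j ⊆ ({Lab2.O, Lab2.U, Lab2.A, Lab2.B, Lab2.P, Lab2.Q} : Finset Lab2)) ∨
     a - x - 1 ≤ (Finset.univ.filter
        (fun i => Y i ⊆ ({Lab2.A, Lab2.B, Lab2.P, Lab2.Q} : Finset Lab2))).card ∨
     Δ - x ≤ (Finset.univ.filter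
        (fun i => Y i ⊆ ({Lab2.U, Lab2.B, Lab2.P, Lab2.Q} : Finset Lab2))).card) := by
  by_contra! hcon
  obtain ⟨hMUBQ, hPQ, hABPQ, hUBPQ⟩ := hcon
  obtain ⟨g, hgY, hg⟩ : ∃ g : Fin Δ → Lab2, (∀ i, g i ∈ Y i) ∧ ¬Lab2.reNodeC Δ a x g := by
    by_cases hXM : ∃ j, Lab2.X ∈ Y j ∨ Lab2.M ∈ Y j
    · obtain ⟨j, hj⟩ := hXM
      exact Lab2.exists_not_reNodeC_of_mem_X_or_M hax haΔ hne hj hMUBQ hABPQ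
    · push Not at hXM
      exact Lab2.exists_not_reNodeC_of_forall_not_mem hax haΔ hrc (fun i => (hXM i).1)
        (fun i => (hXM i).2) hPQ hABPQ hUBPQ
  exact hg (htr g hgY)

/-- (Core of the speedup lemma.) If every transversal of a tuple of
nonempty right-closed sets of `Σ'`-labels satisfies the node constraint of
`re(Π_Δ(a,x))`, then the tuple can be relaxed to a node configuration of `Π_rel`. -/
theorem stmt_3 (Δ a x : ℕ) (hΔ : 1 ≤ Δ) (hax : x + 2 ≤ a) (haΔ : a ≤ Δ)
    (Y : Fin Δ → Finset Lab2)
    (hne : ∀ i, (Y i).Nonempty)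
    (hrc : ∀ i, rightClosed2 (Y i))
    (htr : ∀ g : Fin Δ → Lab2, (∀ i, g i ∈ Y i) →
      (Δ - x ≤ (Finset.univ.filter
          (fun i => g i ∈ ({Lab2.M, Lab2.U, Lab2.B, Lab2.Q} : Finset Lab2))).card ∨
       (∃ i, g i ∈ ({Lab2.P, Lab2.Q} : Finset Lab2) ∧ ∀ j, j ≠ i →
          g j ∈ ({Lab2.O, Lab2.U, Lab2.A, Lab2.B, Lab2.P, Lab2.Q} : Finset Lab2)) ∨
       a ≤ (Finset.univ.filter
          (fun i => g i ∈ ({Lab2.A, Lab2.B, Lab2.P, Lab2.Q} : Finset Lab2))).card)) :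
    (Δ - x - 1 ≤ (Finset.univ.filter
        (fun i => Y i ⊆ ({Lab2.M, Lab2.U, Lab2.B, Lab2.Q} : Finset Lab2))).card ∨
     (∃ i, Y i ⊆ ({Lab2.P, Lab2.Q} : Finset Lab2) ∧ ∀ j, j ≠ i →
        Y j ⊆ ({Lab2.O, Lab2.U, Lab2.A, Lab2.B, Lab2.P, Lab2.Q} : Finset Lab2)) ∨
     a - x - 1 ≤ (Finset.univ.filter
        (fun i => Y i ⊆ ({Lab2.A, Lab2.B, Lab2.P, Lab2.Q} : Finset Lab2))).card ∨
     Δ - x ≤ (Finset.univ.filter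
        (fun i => Y i ⊆ ({Lab2.U, Lab2.B, Lab2.P, Lab2.Q} : Finset Lab2))).card) :=
  stmt_3_general Δ a x hax haΔ Y hne hrc htr
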